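/- arXiv:2504.05066 — 4 statements merged into one kernel-verified Lean document; each statement's English description precedes it below -/
import Mathlib

section
/- Let l > 0, α, q, d, λ ∈ ℝ with 0 ≤ α < 1 + q and d - λ > 0. Set ν = (l/π)·√(d-λ), and let N ∈ ℕ with N > 1 + ν. Then ∑_{k=N}^{∞} k^{α-q} / |-(kπ/l)² + (d-λ)| ≤ (l/π)² · (N-1-ν)^{α-(1+q)} / ((1+q) - α). -/
open Real

/-- Bernoulli-type key inequality: `β (a+1)^{-(β+1)} ≤ a^{-β} - (a+1)^{-β}`. -/
lemma key_ineq {a β : ℝ} (ha : 0 < a) (hβ : 0 < β) :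
    β * (a + 1) ^ (-(β + 1)) ≤ a ^ (-β) - (a + 1) ^ (-β) := by
  have hb : (0:ℝ) < a + 1 := by linarith
  -- Bernoulli : (1 + 1/a)^(β+1) ≥ 1 + (β+1)/a
  have hber : 1 + (β + 1) * (1 / a) ≤ (1 + 1 / a) ^ (β + 1) :=
    one_add_mul_self_le_rpow_one_add (by have := one_div_pos.mpr ha; linarith) (by linarith)
  -- hence (a+1)^(β+1) ≥ a^β * (a + 1 + β)
  have hmain : a ^ β * (a + 1 + β) ≤ (a + 1) ^ (β + 1) := by
    have h1 : (a + 1) ^ (β + 1) = a ^ (β + 1) * (1 + 1 / a) ^ (β + 1) := by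
      rw [← Real.mul_rpow ha.le (by positivity)]
      congr 1; field_simp
    have h2 : a ^ (β + 1) * (1 + (β + 1) * (1 / a)) ≤ a ^ (β + 1) * (1 + 1 / a) ^ (β + 1) :=
      mul_le_mul_of_nonneg_left hber (by positivity)
    have h3 : a ^ (β + 1) * (1 + (β + 1) * (1 / a)) = a ^ β * (a + 1 + β) := by
      have : a ^ (β + 1) = a ^ β * a := by rw [Real.rpow_add ha, Real.rpow_one]
      rw [this]; field_simp; ring
    rw [h1]; rw [h3] at h2; exact h2
  -- now divide through
  have hbp : (0:ℝ) < (a + 1) ^ (β + 1) := Real.rpow_pos_of_pos hb _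
  have hap : (0:ℝ) < a ^ β := Real.rpow_pos_of_pos ha _
  have hcp : (0:ℝ) < (a + 1) ^ β := Real.rpow_pos_of_pos hb _
  have hsplit : (a + 1) ^ (β + 1) = (a + 1) ^ β * (a + 1) := by
    rw [Real.rpow_add hb, Real.rpow_one]
  rw [Real.rpow_neg hb.le (β + 1), Real.rpow_neg ha.le β, Real.rpow_neg hb.le β]
  have hid : (a ^ β)⁻¹ - ((a + 1) ^ β)⁻¹ - β * ((a + 1) ^ (β + 1))⁻¹
      = ((a + 1) ^ (β + 1) - a ^ β * (a + 1 + β)) * ((a ^ β)⁻¹ * ((a + 1) ^ (β + 1))⁻¹) := by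
    rw [hsplit]
    field_simp
    ring
  nlinarith [mul_nonneg (sub_nonneg.2 hmain) (le_of_lt (mul_pos (inv_pos.2 hap) (inv_pos.2 hbp)))]

theorem tail_hasSum {x0 β C : ℝ} (hx0 : 0 < x0) (hβ : 0 < β) (hC : 0 ≤ C) :
    HasSum (fun n : ℕ => C * (x0 + n) ^ (-β) - C * (x0 + (n + 1 : ℕ)) ^ (-β))
      (C * x0 ^ (-β)) := by
  set F : ℕ → ℝ := fun n => C * (x0 + n) ^ (-β) with hF
  have hpos : ∀ n : ℕ, (0:ℝ) < x0 + n := fun n => by positivity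
  have hnonneg : ∀ n : ℕ, 0 ≤ F n - F (n + 1) := by
    intro n
    have : (x0 + (n + 1 : ℕ)) ^ (-β) ≤ (x0 + n) ^ (-β) := by
      apply Real.rpow_le_rpow_of_nonpos (hpos n) _ (by linarith)
      push_cast; linarith
    simp only [hF]; nlinarith [this]
  rw [hasSum_iff_tendsto_nat_of_nonneg hnonneg]
  have hsum : ∀ n : ℕ, ∑ i ∈ Finset.range n, (F i - F (i + 1)) = F 0 - F n :=
    fun n => Finset.sum_range_sub' F n
  simp only [hsum]
  have hlim : Filter.Tendsto F Filter.atTop (nhds 0) := by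
    have h1 : Filter.Tendsto (fun n : ℕ => x0 + (n:ℝ)) Filter.atTop Filter.atTop := by
      exact Filter.tendsto_atTop_add_const_left _ _ tendsto_natCast_atTop_atTop
    have h2 := (tendsto_rpow_neg_atTop hβ).comp h1
    have := h2.const_mul C
    simpa [hF, Function.comp] using this
  have : Filter.Tendsto (fun n => F 0 - F n) Filter.atTop (nhds (F 0 - 0)) :=
    Filter.Tendsto.sub tendsto_const_nhds hlim
  simpa [hF] using this

def tailEquiv (N : ℕ) : ℕ ≃ {k : ℕ // N ≤ k} where
  toFun n := ⟨N + n, Nat.le_add_right N n⟩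
  invFun k := k.1 - N
  left_inv n := by simp
  right_inv k := Subtype.ext (by simpa using Nat.add_sub_cancel' k.2)

/-- Weighted eigenvalue tail sum estimate, case `d - λ > 0`. -/
theorem stmt2 (l α q d lam : ℝ) (hl : 0 < l) (hα0 : 0 ≤ α) (hα : α < 1 + q)
    (hd : 0 < d - lam) (ν : ℝ) (hν : ν = (l / π) * Real.sqrt (d - lam))
    (N : ℕ) (hN : 1 + ν < (N : ℝ)) :
    ∑' k : {k : ℕ // N ≤ k},
        ((k : ℕ) : ℝ) ^ (α - q) / |(-((((k : ℕ) : ℝ) * π / l) ^ 2)) + (d - lam)| ≤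
      (l / π) ^ 2 * ((N : ℝ) - 1 - ν) ^ (α - (1 + q)) / ((1 + q) - α) := by
  have hπ : (0:ℝ) < π := Real.pi_pos
  have hν0 : 0 < ν := by
    rw [hν]; positivity
  set β : ℝ := (1 + q) - α with hβdef
  have hβ : 0 < β := by simp [hβdef]; linarith
  set C : ℝ := (l / π) ^ 2 / β with hCdef
  have hC : 0 ≤ (l / π) ^ 2 / β := by positivity
  have hν2 : ν ^ 2 = (l / π) ^ 2 * (d - lam) := by
    rw [hν, mul_pow, Real.sq_sqrt hd.le]
  -- pointwise bound for k ≥ N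
  have hbound : ∀ k : ℕ, N ≤ k →
      ((k : ℕ) : ℝ) ^ (α - q) / |(-(((k : ℝ) * π / l) ^ 2)) + (d - lam)|
        ≤ C * ((k:ℝ) - 1 - ν) ^ (-β) - C * ((k:ℝ) - ν) ^ (-β) := by
    intro k hk
    have hKN : (N:ℝ) ≤ k := by exact_mod_cast hk
    have hK : 1 + ν < (k:ℝ) := lt_of_lt_of_le hN hKN
    have hK0 : (0:ℝ) < k := by linarith
    have ha : 0 < (k:ℝ) - 1 - ν := by linarith
    have hb : 0 < (k:ℝ) - ν := by linarith
    -- rewrite the absolute value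
    have habs : |(-(((k : ℝ) * π / l) ^ 2)) + (d - lam)|
        = (π / l) ^ 2 * (((k:ℝ) - ν) * ((k:ℝ) + ν)) := by
      have hexp : ((k : ℝ) * π / l) ^ 2 - (d - lam)
          = (π / l) ^ 2 * (((k:ℝ) - ν) * ((k:ℝ) + ν)) := by
        have : (π / l) ^ 2 * ν ^ 2 = d - lam := by
          rw [hν2]; field_simp
        linear_combination this
      have hpos : 0 < ((k : ℝ) * π / l) ^ 2 - (d - lam) := by
        rw [hexp]; positivity
      rw [show (-(((k : ℝ) * π / l) ^ 2)) + (d - lam)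
          = -((((k : ℝ) * π / l) ^ 2) - (d - lam)) by ring, abs_neg,
        abs_of_pos hpos, hexp]
    rw [habs]
    -- step B : bound by (l/π)^2 * (k-ν)^(-(β+1))
    have hstepB : ((k:ℝ)) ^ (α - q) / ((π / l) ^ 2 * (((k:ℝ) - ν) * ((k:ℝ) + ν)))
        ≤ (l / π) ^ 2 * ((k:ℝ) - ν) ^ (-(β + 1)) := by
      have h1 : ((k:ℝ)) ^ (α - q) / (((k:ℝ) - ν) * ((k:ℝ) + ν))
          ≤ ((k:ℝ)) ^ (α - q) / (((k:ℝ) - ν) * (k:ℝ)) := by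
        apply div_le_div_of_nonneg_left (Real.rpow_nonneg hK0.le _) (by positivity)
        apply mul_le_mul_of_nonneg_left (by linarith) hb.le
      have h2 : ((k:ℝ)) ^ (α - q) / (((k:ℝ) - ν) * (k:ℝ))
          ≤ ((k:ℝ) - ν) ^ (-(β + 1)) := by
        have hkk : ((k:ℝ)) ^ (α - q) / (k:ℝ) = ((k:ℝ)) ^ (α - q - 1) := by
          rw [Real.rpow_sub_one hK0.ne' (α - q)]
        have hchain : ((k:ℝ)) ^ (α - q) / (((k:ℝ) - ν) * (k:ℝ))
            = ((k:ℝ)) ^ (α - q - 1) / ((k:ℝ) - ν) := by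
          rw [← hkk, div_div, mul_comm ((k:ℝ) - ν) (k:ℝ)]
        rw [hchain]
        have hle : ((k:ℝ)) ^ (α - q - 1) ≤ ((k:ℝ) - ν) ^ (α - q - 1) :=
          Real.rpow_le_rpow_of_nonpos hb (by linarith) (by linarith)
        calc ((k:ℝ)) ^ (α - q - 1) / ((k:ℝ) - ν)
            ≤ ((k:ℝ) - ν) ^ (α - q - 1) / ((k:ℝ) - ν) := by gcongr
          _ = ((k:ℝ) - ν) ^ (α - q - 1 - 1) := by
              rw [Real.rpow_sub_one hb.ne' (α - q - 1)]
          _ = ((k:ℝ) - ν) ^ (-(β + 1)) := by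
              congr 1; simp only [hβdef]; ring
      calc ((k:ℝ)) ^ (α - q) / ((π / l) ^ 2 * (((k:ℝ) - ν) * ((k:ℝ) + ν)))
          = (l / π) ^ 2 * (((k:ℝ)) ^ (α - q) / (((k:ℝ) - ν) * ((k:ℝ) + ν))) := by
            rw [mul_div_assoc']
            rw [div_eq_div_iff (by positivity) (by positivity)]
            field_simp
        _ ≤ (l / π) ^ 2 * (((k:ℝ)) ^ (α - q) / (((k:ℝ) - ν) * (k:ℝ))) := by
            apply mul_le_mul_of_nonneg_left h1 (by positivity)
        _ ≤ (l / π) ^ 2 * ((k:ℝ) - ν) ^ (-(β + 1)) := by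
            apply mul_le_mul_of_nonneg_left h2 (by positivity)
    -- step C : key inequality
    have hstepC : ((k:ℝ) - ν) ^ (-(β + 1))
        ≤ (((k:ℝ) - 1 - ν) ^ (-β) - ((k:ℝ) - ν) ^ (-β)) / β := by
      have := key_ineq ha hβ
      rw [show ((k:ℝ) - 1 - ν) + 1 = (k:ℝ) - ν by ring] at this
      rw [le_div_iff₀ hβ, mul_comm]
      exact this
    calc ((k:ℝ)) ^ (α - q) / ((π / l) ^ 2 * (((k:ℝ) - ν) * ((k:ℝ) + ν)))
        ≤ (l / π) ^ 2 * ((k:ℝ) - ν) ^ (-(β + 1)) := hstepB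
      _ ≤ (l / π) ^ 2 * ((((k:ℝ) - 1 - ν) ^ (-β) - ((k:ℝ) - ν) ^ (-β)) / β) :=
          mul_le_mul_of_nonneg_left hstepC (by positivity)
      _ = C * ((k:ℝ) - 1 - ν) ^ (-β) - C * ((k:ℝ) - ν) ^ (-β) := by
          rw [hCdef]; field_simp
  -- set up the equiv and the telescoping majorant
  set x0 : ℝ := (N:ℝ) - 1 - ν with hx0def
  have hx0 : 0 < x0 := by simp [hx0def]; linarith
  have htel : HasSum (fun n : ℕ => C * (x0 + n) ^ (-β) - C * (x0 + (n + 1 : ℕ)) ^ (-β))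
      (C * x0 ^ (-β)) := tail_hasSum hx0 hβ hC
  set f : {k : ℕ // N ≤ k} → ℝ := fun k =>
    ((k : ℕ) : ℝ) ^ (α - q) / |(-((((k : ℕ) : ℝ) * π / l) ^ 2)) + (d - lam)| with hf
  set e : ℕ ≃ {k : ℕ // N ≤ k} := tailEquiv N with hedef
  have he : ∀ n : ℕ, (((e n : {k : ℕ // N ≤ k}) : ℕ) : ℝ) = (N:ℝ) + n := by
    intro n; rw [hedef]; show ((N + n : ℕ) : ℝ) = (N:ℝ) + n; push_cast; ring
  rw [← Equiv.tsum_eq e f]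
  have hpt : ∀ n : ℕ, f (e n) ≤ C * (x0 + n) ^ (-β) - C * (x0 + (n + 1 : ℕ)) ^ (-β) := by
    intro n
    have h := hbound (N + n) (Nat.le_add_right N n)
    have heq1 : ((N + n : ℕ) : ℝ) = (N:ℝ) + n := by push_cast; ring
    have heq2 : (N:ℝ) + n - 1 - ν = x0 + n := by simp [hx0def]; ring
    have heq3 : (N:ℝ) + n - ν = x0 + (n + 1 : ℕ) := by push_cast; simp [hx0def]; ring
    simp only [hf]
    have : f (e n) = ((N + n : ℕ) : ℝ) ^ (α - q)
        / |(-((((N + n : ℕ) : ℝ) * π / l) ^ 2)) + (d - lam)| := by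
      simp only [hf]
      congr 2 <;> rw [he n, heq1]
    rw [heq1, heq2, heq3] at h
    calc f (e n) = ((N + n : ℕ) : ℝ) ^ (α - q)
        / |(-((((N + n : ℕ) : ℝ) * π / l) ^ 2)) + (d - lam)| := this
      _ ≤ _ := by push_cast at h ⊢; exact h
  have hnn : ∀ n : ℕ, 0 ≤ f (e n) := by
    intro n
    apply div_nonneg (Real.rpow_nonneg (Nat.cast_nonneg _) _) (abs_nonneg _)
  have hsummf : Summable (fun n => f (e n)) :=
    Summable.of_nonneg_of_le hnn hpt htel.summable
  have hle := Summable.tsum_le_tsum hpt hsummf htel.summable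
  rw [htel.tsum_eq] at hle
  refine hle.trans_eq ?_
  rw [hCdef, hx0def]
  have : α - (1 + q) = -β := by simp [hβdef]
  rw [this]
  ring
end

section
/- Let E be a Banach space with a Schauder basis such that every x = (x_0, x_1, …) ∈ E attains its supremum coordinate, i.e. there exists i₀ with |x_{i₀}| = sup_i |x_i|. Let L = (l_{ij}) be a (possibly unbounded) linear operator on E represented in this basis. If λ is an eigenvalue of L with eigenvector x ∈ E, then there exists i₀ ∈ ℕ such that |l_{i₀ i₀} - λ| ≤ ∑_{j ≠ i₀} |l_{i₀ j}|, i.e. λ lies in the i₀-th Gershgorin disk of L. -/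
open ENNReal

theorem HasSum.hasSum_subtype_ne {α β : Type*} [AddCommGroup α] [TopologicalSpace α]
    [IsTopologicalAddGroup α] {f : β → α} {a : α} (hf : HasSum f a) (b : β) :
    HasSum (fun j : {j // j ≠ b} => f j) (a - f b) :=
  (hasSum_singleton b f).hasSum_iff_compl.mp hf

theorem enorm_diag_sub_le_tsum_enorm_offDiag {𝕜 ι : Type*} [NormedField 𝕜]
    {L : ι → ι → 𝕜} {x : ι → 𝕜} {lam : 𝕜} {i : ι}
    (heig : HasSum (fun j => L i j * x j) (lam * x i)) (hmax : ∀ j, ‖x j‖ ≤ ‖x i‖)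
    (hxi : x i ≠ 0) :
    ‖L i i - lam‖ₑ ≤ ∑' j : {j // j ≠ i}, ‖L i j‖ₑ := by
  have hoff : HasSum (fun j : {j // j ≠ i} => L i j * x j) ((lam - L i i) * x i) := by
    simpa only [sub_mul] using heig.hasSum_subtype_ne i
  refine (ENNReal.mul_le_mul_iff_left (enorm_ne_zero.2 hxi) enorm_ne_top).1 ?_
  calc ‖L i i - lam‖ₑ * ‖x i‖ₑ = ‖(lam - L i i) * x i‖ₑ := by rw [enorm_mul, enorm_sub_rev]
    _ ≤ ∑' j : {j // j ≠ i}, ‖L i j‖ₑ * ‖x i‖ₑ :=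
      hoff.enorm_le_of_bounded ENNReal.summable.hasSum fun j => by
        rw [enorm_mul]
        gcongr
        exact enorm_le_iff_norm_le.2 (hmax j)
    _ = (∑' j : {j // j ≠ i}, ‖L i j‖ₑ) * ‖x i‖ₑ := ENNReal.tsum_mul_right

/-- Gershgorin localization for infinite matrices: every eigenvalue whose eigenvector attains
its supremum coordinate lies in some Gershgorin disk (with possibly infinite radius). -/
theorem stmt5 (L : ℕ → ℕ → ℂ) (x : ℕ → ℂ) (lam : ℂ) (hx : x ≠ 0)
    (heig : ∀ i, HasSum (fun j => L i j * x j) (lam * x i))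
    (hsup : ∃ i₀, ∀ i, ‖x i‖ ≤ ‖x i₀‖) :
    ∃ i₀ : ℕ, (‖L i₀ i₀ - lam‖₊ : ℝ≥0∞) ≤ ∑' j : {j : ℕ // j ≠ i₀}, (‖L i₀ (j : ℕ)‖₊ : ℝ≥0∞) := by
  obtain ⟨i₀, hmax⟩ := hsup
  have hxi : x i₀ ≠ 0 := fun h =>
    hx (funext fun j => norm_le_zero_iff.mp (by simpa [h] using hmax j))
  exact ⟨i₀, enorm_diag_sub_le_tsum_enorm_offDiag (heig i₀) hmax hxi⟩
end

section
/- Let X, Y be Banach spaces, F : X → Y be Fréchet differentiable, X̄ ∈ X, and A : Y → X an injective bounded linear operator. Suppose there exist constants Y₀, Z₁, Z₂ ≥ 0 such that ‖A F(X̄)‖ ≤ Y₀, ‖I - A DF(X̄)‖ ≤ Z₁, and ‖A(DF(X̄) - DF(X))‖ ≤ Z₂‖X̄ - X‖ for all X ∈ X. If Z₁ < 1 and (1 - Z₁)² - 2 Z₂ Y₀ > 0, then setting r_min = ((1-Z₁) - √((1-Z₁)² - 2Z₂Y₀))/Z₂ and r_max = (1-Z₁)/Z₂, for every r ∈ [r_min,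 r_max) there exists a unique X̂ in the closed ball of radius r around X̄ with F(X̂) = 0. -/
/-!
The map `T x = x - A (F x)` has derivative `I - A DF(x)`, whose norm is at most `Z₁ + Z₂ ‖x - X̄‖`.
Integrating this affine bound along the segment from `X̄` gives
`‖T x - X̄‖ ≤ Y₀ + Z₁ ρ + Z₂ ρ² / 2` for `‖x - X̄‖ ≤ ρ`, so `T` maps the ball of radius `r` into
itself as soon as `Z₂ r² / 2 - (1 - Z₁) r + Y₀ ≤ 0`, which holds for `r_min ≤ r ≤ r_max`. On that
ball `T` is Lipschitz with constant `Z₁ + Z₂ r`, which is `< 1` because `r < r_max`. Banach's fixed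
point theorem gives a unique fixed point in the ball, and the fixed points of `T` are the zeros of
`F` because `A` is injective.
-/

open Function Metric Set

theorem quadratic_nonpos_of_smaller_root_le_of_le_vertex {a b c r : ℝ} (ha : 0 < a)
    (hdisc : 0 ≤ b ^ 2 - 2 * a * c) (h_root : (b - Real.sqrt (b ^ 2 - 2 * a * c)) / a ≤ r)
    (h_vertex : r ≤ b / a) : a * r ^ 2 / 2 - b * r + c ≤ 0 := by
  have hs := Real.sq_sqrt hdisc
  have h₁ : b - Real.sqrt (b ^ 2 - 2 * a * c) ≤ a * r := (div_le_iff₀' ha).mp h_root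
  have h₂ : a * r ≤ b := (le_div_iff₀' ha).mp h_vertex
  have hsq : (a * r - b) ^ 2 ≤ b ^ 2 - 2 * a * c := by
    nlinarith [Real.sqrt_nonneg (b ^ 2 - 2 * a * c)]
  nlinarith

theorem LipschitzOnWith.existsUnique_isFixedPt {α : Type*} [MetricSpace α] [CompleteSpace α]
    {f : α → α} {s : Set α} {K : NNReal} (hf : LipschitzOnWith K f s) (hK : K < 1)
    (hsc : IsClosed s) (hsf : MapsTo f s s) {x₀ : α} (hx₀ : x₀ ∈ s) :
    ∃! x, x ∈ s ∧ IsFixedPt f x := by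
  have hcontr : ContractingWith K (hsf.restrict f s s) := ⟨hK, fun x y => hf x.2 y.2⟩
  obtain ⟨x, hxs, hfx, -⟩ :=
    hcontr.exists_fixedPoint' hsc.isComplete hsf hx₀ (edist_ne_top _ _)
  refine ⟨x, ⟨hxs, hfx⟩, fun y ⟨hys, hfy⟩ => ?_⟩
  have hdist : dist y x ≤ K * dist y x := by
    simpa only [hfy.eq, hfx.eq] using hf.dist_le_mul y hys x hxs
  have hK' : (K : ℝ) < 1 := hK
  exact dist_le_zero.mp (by nlinarith [dist_nonneg (x := y) (y := x)])

theorem norm_sub_le_of_norm_hasFDerivAt_le_affine {E F : Type*} [NormedAddCommGroup E]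
    [NormedSpace ℝ E] [NormedAddCommGroup F] [NormedSpace ℝ F] {f : E → F}
    {f' : E → E →L[ℝ] F} {c x : E} {a b : ℝ}
    (hf : ∀ y ∈ segment ℝ c x, HasFDerivAt f (f' y) y)
    (bound : ∀ y ∈ segment ℝ c x, ‖f' y‖ ≤ a + b * ‖y - c‖) :
    ‖f x - f c‖ ≤ a * ‖x - c‖ + b * ‖x - c‖ ^ 2 / 2 := by
  set u := x - c
  have hseg : ∀ t ∈ Icc (0 : ℝ) 1, c + t • u ∈ segment ℝ c x := fun t ht => by
    rw [segment_eq_image']; exact ⟨t, ht, rfl⟩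
  let g : ℝ → F := fun t => f (c + t • u) - f c
  have hg : ∀ t ∈ Icc (0 : ℝ) 1, HasDerivAt g (f' (c + t • u) u) t := fun t ht => by
    have hline : HasDerivAt (fun t : ℝ => c + t • u) u t := by
      simpa using ((hasDerivAt_id t).smul_const u).const_add c
    exact ((hf _ (hseg t ht)).comp_hasDerivAt t hline).sub_const (f c)
  let B : ℝ → ℝ := fun t => a * ‖u‖ * t + b * ‖u‖ ^ 2 / 2 * t ^ 2
  have hB : ∀ t, HasDerivAt B (a * ‖u‖ + b * ‖u‖ ^ 2 * t) t := fun t => by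
    refine (((hasDerivAt_id t).const_mul (a * ‖u‖)).add
      ((hasDerivAt_pow 2 t).const_mul (b * ‖u‖ ^ 2 / 2))).congr_deriv ?_
    ring
  have hg' : ∀ t ∈ Ico (0 : ℝ) 1, ‖f' (c + t • u) u‖ ≤ a * ‖u‖ + b * ‖u‖ ^ 2 * t := by
    intro t ht
    have hbd := bound _ (hseg t (Ico_subset_Icc_self ht))
    rw [add_sub_cancel_left, norm_smul, Real.norm_of_nonneg ht.1] at hbd
    calc ‖f' (c + t • u) u‖ ≤ ‖f' (c + t • u)‖ * ‖u‖ := (f' _).le_opNorm u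
      _ ≤ (a + b * (t * ‖u‖)) * ‖u‖ := by gcongr
      _ = a * ‖u‖ + b * ‖u‖ ^ 2 * t := by ring
  have := image_norm_le_of_norm_deriv_right_le_deriv_boundary
    (fun t ht => (hg t ht).continuousAt.continuousWithinAt)
    (fun t ht => (hg t (Ico_subset_Icc_self ht)).hasDerivWithinAt) (by simp [g, B]) hB hg'
    (right_mem_Icc.2 zero_le_one)
  simpa [g, B, u] using this

section SelfMap

variable {E : Type*} [NormedAddCommGroup E] [NormedSpace ℝ E] {f : E → E}
  {f' : E → E →L[ℝ] E} {c : E} {y a b r : ℝ}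
  (hf : ∀ x ∈ closedBall c r, HasFDerivAt f (f' x) x)
  (bound : ∀ x ∈ closedBall c r, ‖f' x‖ ≤ a + b * ‖x - c‖)
include hf bound

theorem mapsTo_closedBall_of_norm_hasFDerivAt_le_affine (hr : 0 ≤ r) (hb : 0 ≤ b)
    (hc : ‖f c - c‖ ≤ y) (hrad : y + a * r + b * r ^ 2 / 2 ≤ r) :
    MapsTo f (closedBall c r) (closedBall c r) := by
  intro x hx
  have hρ : ‖x - c‖ ≤ r := mem_closedBall_iff_norm.mp hx
  have ha : 0 ≤ a := (norm_nonneg _).trans (by simpa using bound c (mem_closedBall_self hr))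
  have hseg : segment ℝ c x ⊆ closedBall c r :=
    (convex_closedBall c r).segment_subset (mem_closedBall_self hr) hx
  have hquad := norm_sub_le_of_norm_hasFDerivAt_le_affine (fun z hz => hf z (hseg hz))
    (fun z hz => bound z (hseg hz))
  rw [mem_closedBall_iff_norm]
  calc ‖f x - c‖ ≤ ‖f x - f c‖ + ‖f c - c‖ := norm_sub_le_norm_sub_add_norm_sub _ _ _
    _ ≤ a * ‖x - c‖ + b * ‖x - c‖ ^ 2 / 2 + y := add_le_add hquad hc
    _ ≤ a * r + b * r ^ 2 / 2 + y := by gcongr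
    _ ≤ r := by linarith

theorem lipschitzOnWith_closedBall_of_norm_hasFDerivAt_le_affine (hb : 0 ≤ b) :
    LipschitzOnWith (a + b * r).toNNReal f (closedBall c r) := by
  refine (convex_closedBall c r).lipschitzOnWith_of_nnnorm_hasFDerivWithin_le
    (fun x hx => (hf x hx).hasFDerivWithinAt) fun x hx => ?_
  rw [← norm_toNNReal]
  refine Real.toNNReal_le_toNNReal ((bound x hx).trans ?_)
  gcongr
  exact mem_closedBall_iff_norm.mp hx

theorem existsUnique_isFixedPt_closedBall_of_norm_hasFDerivAt_le_affine [CompleteSpace E]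
    (hr : 0 ≤ r) (hb : 0 ≤ b) (hc : ‖f c - c‖ ≤ y) (hcontr : a + b * r < 1)
    (hrad : y + a * r + b * r ^ 2 / 2 ≤ r) :
    ∃! x, x ∈ closedBall c r ∧ IsFixedPt f x :=
  (lipschitzOnWith_closedBall_of_norm_hasFDerivAt_le_affine hf bound hb).existsUnique_isFixedPt
    (Real.toNNReal_lt_one.mpr hcontr) isClosed_closedBall
    (mapsTo_closedBall_of_norm_hasFDerivAt_le_affine hf bound hr hb hc hrad)
    (mem_closedBall_self hr)

end SelfMap

theorem isFixedPt_sub_apply_iff {X Y : Type*} [NormedAddCommGroup X] [NormedSpace ℝ X]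
    [NormedAddCommGroup Y] [NormedSpace ℝ Y] {A : Y →L[ℝ] X} (hA : Injective A)
    {F : X → Y} {x : X} : IsFixedPt (fun x => x - A (F x)) x ↔ F x = 0 := by
  simp only [IsFixedPt, sub_eq_self, map_eq_zero_iff A hA]

theorem stmt6_general {X Y : Type*} [NormedAddCommGroup X] [NormedSpace ℝ X] [CompleteSpace X]
    [NormedAddCommGroup Y] [NormedSpace ℝ Y]
    (F : X → Y) (DF : X → X →L[ℝ] Y) (hF : ∀ x, HasFDerivAt F (DF x) x)
    (A : Y →L[ℝ] X) (hA : Function.Injective A)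
    (Xbar : X) (Y₀ Z₁ Z₂ : ℝ) (hY₀ : 0 ≤ Y₀) (hZ₂ : 0 < Z₂)
    (hbY : ‖A (F Xbar)‖ ≤ Y₀)
    (hbZ1 : ‖ContinuousLinearMap.id ℝ X - A.comp (DF Xbar)‖ ≤ Z₁)
    (hbZ2 : ∀ x : X, ‖A.comp (DF Xbar - DF x)‖ ≤ Z₂ * ‖Xbar - x‖)
    (hZ1lt : Z₁ < 1) (hdisc : 0 < (1 - Z₁) ^ 2 - 2 * Z₂ * Y₀) :
    ∀ r : ℝ, ((1 - Z₁) - Real.sqrt ((1 - Z₁) ^ 2 - 2 * Z₂ * Y₀)) / Z₂ ≤ r →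
      r < (1 - Z₁) / Z₂ →
      ∃! x : X, x ∈ Metric.closedBall Xbar r ∧ F x = 0 := by
  intro r hr_min hr_max
  have hpoly : Z₂ * r ^ 2 / 2 - (1 - Z₁) * r + Y₀ ≤ 0 :=
    quadratic_nonpos_of_smaller_root_le_of_le_vertex hZ₂ hdisc.le hr_min hr_max.le
  have hr : 0 ≤ r := by nlinarith
  have hcontr : Z₁ + Z₂ * r < 1 := by linarith [(lt_div_iff₀' hZ₂).mp hr_max]
  have hDT : ∀ x, ‖ContinuousLinearMap.id ℝ X - A.comp (DF x)‖ ≤ Z₁ + Z₂ * ‖x - Xbar‖ := by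
    intro x
    have hsplit : ContinuousLinearMap.id ℝ X - A.comp (DF x) =
        (ContinuousLinearMap.id ℝ X - A.comp (DF Xbar)) + A.comp (DF Xbar - DF x) := by
      rw [ContinuousLinearMap.comp_sub]; abel
    rw [hsplit, norm_sub_rev x]
    exact (norm_add_le _ _).trans (add_le_add hbZ1 (hbZ2 x))
  have hfix := existsUnique_isFixedPt_closedBall_of_norm_hasFDerivAt_le_affine
    (f := fun x => x - A (F x))
    (fun x _ => (hasFDerivAt_id x).sub (A.hasFDerivAt.comp x (hF x))) (fun x _ => hDT x)
    hr hZ₂.le (by simpa using hbY) hcontr (by linarith)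
  simpa only [isFixedPt_sub_apply_iff hA] using hfix

/-- Newton–Kantorovich type theorem with a Newton-like operator `X ↦ X - A F(X)`. -/
theorem stmt6 {X Y : Type*} [NormedAddCommGroup X] [NormedSpace ℝ X] [CompleteSpace X]
    [NormedAddCommGroup Y] [NormedSpace ℝ Y]
    (F : X → Y) (DF : X → X →L[ℝ] Y) (hF : ∀ x, HasFDerivAt F (DF x) x)
    (A : Y →L[ℝ] X) (hA : Function.Injective A)
    (Xbar : X) (Y₀ Z₁ Z₂ : ℝ) (hY₀ : 0 ≤ Y₀) (hZ₁ : 0 ≤ Z₁) (hZ₂ : 0 < Z₂)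
    (hbY : ‖A (F Xbar)‖ ≤ Y₀)
    (hbZ1 : ‖ContinuousLinearMap.id ℝ X - A.comp (DF Xbar)‖ ≤ Z₁)
    (hbZ2 : ∀ x : X, ‖A.comp (DF Xbar - DF x)‖ ≤ Z₂ * ‖Xbar - x‖)
    (hZ1lt : Z₁ < 1) (hdisc : 0 < (1 - Z₁) ^ 2 - 2 * Z₂ * Y₀) :
    ∀ r : ℝ, ((1 - Z₁) - Real.sqrt ((1 - Z₁) ^ 2 - 2 * Z₂ * Y₀)) / Z₂ ≤ r →
      r < (1 - Z₁) / Z₂ →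
      ∃! x : X, x ∈ Metric.closedBall Xbar r ∧ F x = 0 :=
  stmt6_general F DF hF A hA Xbar Y₀ Z₁ Z₂ hY₀ hZ₂ hbY hbZ1 hbZ2 hZ1lt hdisc
end

section
/- Let a, b, c, d ∈ ℝ with a + d < 0, ad - bc > 0, b ≥ 0, c ≥ 0, and let ϑ > 0, λ ≥ 0. Then both eigenvalues of the matrix [[a - ϑλ, b], [c, d - λ]] have negative real part. -/
/-- A complex root of `z^2 - T z + D` with `T < 0 < D` has negative real part. -/
lemma quad_root_re_neg (T D : ℝ) (hT : T < 0) (hD : 0 < D) (z : ℂ)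
    (h : z ^ 2 - (T : ℂ) * z + (D : ℂ) = 0) : z.re < 0 := by
  have hre : z.re ^ 2 - z.im ^ 2 - T * z.re + D = 0 := by
    have := congrArg Complex.re h
    simp [Complex.ext_iff, pow_two, Complex.mul_re, Complex.mul_im] at this ⊢
    linarith [this]
  have him : z.im * (2 * z.re - T) = 0 := by
    have := congrArg Complex.im h
    simp [Complex.ext_iff, pow_two, Complex.mul_re, Complex.mul_im] at this
    nlinarith [this]
  rcases mul_eq_zero.mp him with h0 | h0
  · -- real root
    rw [h0] at hre
    nlinarith [sq_nonneg z.re]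
  · nlinarith

/-- With a stable reaction matrix and nonnegative cross terms, diffusion cannot destabilize:
every eigenvalue of `[[a - ϑλ, b], [c, d - λ]]` has negative real part. -/
theorem stmt19 (a b c d ϑ lam : ℝ) (htr : a + d < 0) (hdet : 0 < a * d - b * c)
    (hb : 0 ≤ b) (hc : 0 ≤ c) (hϑ : 0 < ϑ) (hlam : 0 ≤ lam) :
    ∀ z ∈ spectrum ℂ
        (!![(a : ℂ) - (ϑ : ℂ) * (lam : ℂ), (b : ℂ); (c : ℂ), (d : ℂ) - (lam : ℂ)]),
      z.re < 0 := by
  intro z hz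
  set M : Matrix (Fin 2) (Fin 2) ℂ :=
    !![(a : ℂ) - (ϑ : ℂ) * (lam : ℂ), (b : ℂ); (c : ℂ), (d : ℂ) - (lam : ℂ)] with hM
  rw [spectrum.mem_iff] at hz
  have hdet0 : (algebraMap ℂ (Matrix (Fin 2) (Fin 2) ℂ) z - M).det = 0 := by
    by_contra hne
    exact hz ((Matrix.isUnit_iff_isUnit_det _).mpr (isUnit_iff_ne_zero.mpr hne))
  have hmat : algebraMap ℂ (Matrix (Fin 2) (Fin 2) ℂ) z - M =
      !![z - ((a : ℂ) - (ϑ : ℂ) * (lam : ℂ)), -(b : ℂ);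
         -(c : ℂ), z - ((d : ℂ) - (lam : ℂ))] := by
    ext i j
    fin_cases i <;> fin_cases j <;>
      simp [hM, Matrix.algebraMap_matrix_apply, Matrix.one_apply]
  rw [hmat, Matrix.det_fin_two_of] at hdet0
  set T : ℝ := (a - ϑ * lam) + (d - lam) with hT
  set D : ℝ := (a - ϑ * lam) * (d - lam) - b * c with hD
  have hTneg : T < 0 := by nlinarith
  have hbc : 0 ≤ b * c := mul_nonneg hb hc
  have ha : a < 0 := by nlinarith
  have hd : d < 0 := by nlinarith
  have hDpos : 0 < D := by nlinarith [mul_nonneg (neg_nonneg.mpr ha.le) hlam, mul_nonneg (mul_nonneg hϑ.le (neg_nonneg.mpr hd.le)) hlam, mul_nonneg (mul_nonneg hϑ.le hlam) hlam]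
  have hquad : z ^ 2 - (T : ℂ) * z + (D : ℂ) = 0 := by
    rw [← hdet0]; push_cast [hT, hD]; ring
  exact quad_root_re_neg T D hTneg hDpos z hquad
end
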